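/- arXiv:1804.04617 — 5 statements merged into one kernel-verified Lean document; each statement's English description precedes it below -/
import Mathlib

section
/- Let R be a commutative ring, D : R → R a derivation (an additive map satisfying the Leibniz rule D(ab) = a·D(b) + b·D(a)), and let ℓ, v ∈ R. For any r ≥ 0 and any elements f₀, …, f_r ∈ R, the determinant of the (r+1)×(r+1) matrix whose (j,i)-entry is the j-fold iterate of the derivation x ↦ v·D(x) applied to ℓ·f_i (for 0 ≤ j, i ≤ r) equals ℓ^(r+1) · v^(r(r+1)/2) times the determinant of the (r+1)×(r+1) matrix whose (j,i)-entry is D^j(f_i). -/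
namespace WLaux

variable {R : Type*} [CommRing R]

/-- Coefficients expressing `(v·D)^[j] (ℓ·f)` in terms of `D^[k] f`. -/
def c (D : R → R) (ℓ v : R) : ℕ → ℕ → R
  | 0, 0 => ℓ
  | 0, _+1 => 0
  | j+1, 0 => v * D (c D ℓ v j 0)
  | j+1, k+1 => v * (D (c D ℓ v j (k+1)) + c D ℓ v j k)

variable (D : R → R) (ℓ v : R)

lemma c_eq_zero (hD0 : D 0 = 0) : ∀ j k, j < k → c D ℓ v j k = 0
  | 0, _+1, _ => rfl
  | j+1, k+1, h => by
      simp [c, c_eq_zero hD0 j (k+1) (by omega), c_eq_zero hD0 j k (by omega), hD0]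

lemma c_diag (hD0 : D 0 = 0) : ∀ j, c D ℓ v j j = ℓ * v ^ j
  | 0 => by simp [c]
  | j+1 => by
      rw [show c D ℓ v (j+1) (j+1) = v * (D (c D ℓ v j (j+1)) + c D ℓ v j j) from rfl,
        c_eq_zero D ℓ v hD0 j (j+1) (by omega), hD0, c_diag hD0 j]
      ring

lemma expand (hadd : ∀ a b : R, D (a + b) = D a + D b)
    (hleib : ∀ a b : R, D (a * b) = a * D b + b * D a) (hD0 : D 0 = 0) :
    ∀ (j : ℕ) (f : R), (fun x => v * D x)^[j] (ℓ * f)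
      = ∑ k ∈ Finset.range (j+1), c D ℓ v j k * D^[k] f := by
  intro j
  induction j with
  | zero => intro f; simp [c]
  | succ j ih =>
    intro f
    rw [Function.iterate_succ_apply', ih]
    show v * D (∑ k ∈ Finset.range (j+1), c D ℓ v j k * D^[k] f) = _
    have hDsum : D (∑ k ∈ Finset.range (j+1), c D ℓ v j k * D^[k] f)
        = ∑ k ∈ Finset.range (j+1), D (c D ℓ v j k * D^[k] f) :=
      map_sum (AddMonoidHom.mk' D hadd) _ _
    rw [hDsum, Finset.mul_sum]
    have lhs_eq : ∀ k ∈ Finset.range (j+1),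
        v * D (c D ℓ v j k * D^[k] f)
          = v * c D ℓ v j k * D^[k+1] f + v * D (c D ℓ v j k) * D^[k] f := by
      intro k _
      rw [hleib, ← Function.iterate_succ_apply' D k f]
      ring
    rw [Finset.sum_congr rfl lhs_eq, Finset.sum_add_distrib]
    -- rewrite the RHS
    rw [Finset.sum_range_succ'
      (fun k => c D ℓ v (j+1) k * D^[k] f) (j+1)]
    have rhs_eq : ∀ k ∈ Finset.range (j+1),
        c D ℓ v (j+1) (k+1) * D^[k+1] f
          = v * D (c D ℓ v j (k+1)) * D^[k+1] f + v * c D ℓ v j k * D^[k+1] f := by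
      intro k _
      rw [show c D ℓ v (j+1) (k+1) = v * (D (c D ℓ v j (k+1)) + c D ℓ v j k) from rfl]
      ring
    rw [Finset.sum_congr rfl rhs_eq, Finset.sum_add_distrib]
    rw [show c D ℓ v (j+1) 0 = v * D (c D ℓ v j 0) from rfl]
    -- split the left-hand B sum
    rw [Finset.sum_range_succ' (fun k => v * D (c D ℓ v j k) * D^[k] f) j]
    rw [Finset.sum_range_succ (fun k => v * D (c D ℓ v j (k+1)) * D^[k+1] f) j]
    rw [c_eq_zero D ℓ v hD0 j (j+1) (by omega), hD0]
    simp only [Function.iterate_zero_apply, mul_zero, zero_mul, add_zero]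
    ring

end WLaux

theorem widland_lax_wronskian_transformation
    {R : Type*} [CommRing R] (D : R → R)
    (hadd : ∀ a b : R, D (a + b) = D a + D b)
    (hleib : ∀ a b : R, D (a * b) = a * D b + b * D a)
    (ℓ v : R) (r : ℕ) (f : Fin (r + 1) → R) :
    Matrix.det (Matrix.of fun j i : Fin (r + 1) =>
        (fun x => v * D x)^[(j : ℕ)] (ℓ * f i)) =
      ℓ ^ (r + 1) * v ^ (r * (r + 1) / 2) *
        Matrix.det (Matrix.of fun j i : Fin (r + 1) => D^[(j : ℕ)] (f i)) := by
  have hD0 : D 0 = 0 := by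
    have h := hadd 0 0
    rw [add_zero] at h
    exact (left_eq_add.mp h)
  set L : Matrix (Fin (r+1)) (Fin (r+1)) R :=
    Matrix.of fun j k : Fin (r+1) => WLaux.c D ℓ v (j : ℕ) (k : ℕ) with hL
  have hM : Matrix.of (fun j i : Fin (r + 1) =>
      (fun x => v * D x)^[(j : ℕ)] (ℓ * f i))
      = L * Matrix.of (fun j i : Fin (r + 1) => D^[(j : ℕ)] (f i)) := by
    ext j i
    rw [Matrix.mul_apply]
    simp only [Matrix.of_apply, hL]
    rw [WLaux.expand D ℓ v hadd hleib hD0 (j : ℕ) (f i),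
      Fin.sum_univ_eq_sum_range (fun k => WLaux.c D ℓ v (j : ℕ) k * D^[k] (f i)) (r+1)]
    apply Finset.sum_subset
    · intro x hx
      simp only [Finset.mem_range] at hx ⊢
      omega
    · intro x hx hnx
      simp only [Finset.mem_range] at hx hnx
      rw [WLaux.c_eq_zero D ℓ v hD0 (j : ℕ) x (by omega), zero_mul]
  rw [hM, Matrix.det_mul]
  congr 1
  rw [Matrix.det_of_lowerTriangular L
    (fun i j h => WLaux.c_eq_zero D ℓ v hD0 (i : ℕ) (j : ℕ)
      (by exact_mod_cast OrderDual.toDual_lt_toDual.mp h))]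
  have hdiag : ∀ i ∈ Finset.univ, L i i = ℓ * v ^ (i : ℕ) := by
    intro i _
    exact WLaux.c_diag D ℓ v hD0 (i : ℕ)
  rw [Finset.prod_congr rfl hdiag, Finset.prod_mul_distrib, Finset.prod_const,
    Finset.prod_pow_eq_pow_sum]
  congr 1
  · simp
  · congr 1
    rw [Fin.sum_univ_eq_sum_range (fun i => i) (r+1), Finset.sum_range_id,
      Nat.add_sub_cancel, Nat.mul_comm]
end

section
/- Let k be a field, B an integral domain which is a k-algebra, and A ⊆ B a k-subalgebra such that the quotient k-vector space B/A is finite dimensional. Let f ∈ A with f ≠ 0, and assume the k-vector space B/fB is finite dimensional. Then dim_k (A/fA) = dim_k (B/fB). -/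
/-!
Multiplication by `f` is an injective endomorphism of `B` preserving `A`. Computing the
codimension of `fA` in `B` along the chains `fA ⊆ A ⊆ B` and `fA ⊆ fB ⊆ B` gives
`dim B/A + dim A/fA = dim B/fB + dim fB/fA`, and `fB/fA ≅ B/A`; cancel the finite `dim B/A`.
-/

open LinearMap Submodule

universe u

theorem LinearMap.rank_quotient_range_comp {R M : Type*} {N P : Type u} [Ring R]
    [HasRankNullity.{u} R] [AddCommGroup M] [AddCommGroup N] [AddCommGroup P]
    [Module R M] [Module R N] [Module R P]
    (g : N →ₗ[R] P) (f : M →ₗ[R] N) (hg : Function.Injective g) :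
    Module.rank R (P ⧸ range (g ∘ₗ f)) =
      Module.rank R (P ⧸ range g) + Module.rank R (N ⧸ range f) := by
  have e : (N ⧸ range f) ≃ₗ[R] range g ⧸ (range f).map g.rangeRestrict :=
    Quotient.equiv _ _ (LinearEquiv.ofInjective g hg) rfl
  rw [range_comp, rank_quot_submodule_map_eq, e.rank_eq]

theorem LinearMap.rank_quotient_range_eq_of_comp_eq {K : Type*} {U V : Type u} [DivisionRing K]
    [AddCommGroup U] [AddCommGroup V] [Module K U] [Module K V]
    (ι : U →ₗ[K] V) (ψ : U →ₗ[K] U) (φ : V →ₗ[K] V)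
    (hι : Function.Injective ι) (hφ : Function.Injective φ) (hcomm : φ ∘ₗ ι = ι ∘ₗ ψ)
    [FiniteDimensional K (V ⧸ range ι)] :
    Module.rank K (U ⧸ range ψ) = Module.rank K (V ⧸ range φ) := by
  have h := rank_quotient_range_comp φ ι hφ
  rw [hcomm, rank_quotient_range_comp ι ψ hι, add_comm] at h
  exact Cardinal.eq_of_add_eq_add_right h (Module.rank_lt_aleph0 K _)

theorem LinearMap.range_mulLeft_eq_span {k R : Type*} [CommSemiring k] [CommRing R]
    [Algebra k R] (a : R) :
    range (mulLeft k a) = (Ideal.span {a}).restrictScalars k := by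
  ext x
  simp [Ideal.mem_span_singleton', mul_comm]

theorem Ideal.rank_quotient_span_singleton {k R : Type*} [CommRing k] [CommRing R]
    [Algebra k R] (a : R) :
    Module.rank k (R ⧸ Ideal.span {a}) = Module.rank k (R ⧸ range (mulLeft k a)) := by
  rw [range_mulLeft_eq_span]
  exact (Quotient.restrictScalarsEquiv k _).rank_eq.symm

theorem order_via_normalisation_general
    {k B : Type*} [Field k] [CommRing B] [IsDomain B] [Algebra k B]
    (A : Subalgebra k B)
    [FiniteDimensional k (B ⧸ (Subalgebra.toSubmodule A))]
    (f : B) (hfA : f ∈ A) (hf : f ≠ 0) :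
    Module.finrank k (A ⧸ Ideal.span {(⟨f, hfA⟩ : A)}) =
      Module.finrank k (B ⧸ Ideal.span {f}) := by
  have hrange : range A.val.toLinearMap = Subalgebra.toSubmodule A := by ext; simp
  have : FiniteDimensional k (B ⧸ range A.val.toLinearMap) := by rwa [hrange]
  have hrank := rank_quotient_range_eq_of_comp_eq A.val.toLinearMap (mulLeft k ⟨f, hfA⟩)
    (mulLeft k f) Subtype.val_injective (mul_right_injective₀ hf) rfl
  rw [Module.finrank, Module.finrank, Ideal.rank_quotient_span_singleton,
    Ideal.rank_quotient_span_singleton, hrank]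

theorem order_via_normalisation
    {k B : Type*} [Field k] [CommRing B] [IsDomain B] [Algebra k B]
    (A : Subalgebra k B)
    [FiniteDimensional k (B ⧸ (Subalgebra.toSubmodule A))]
    (f : B) (hfA : f ∈ A) (hf : f ≠ 0)
    [FiniteDimensional k (B ⧸ Ideal.span {f})] :
    Module.finrank k (A ⧸ Ideal.span {(⟨f, hfA⟩ : A)}) =
      Module.finrank k (B ⧸ Ideal.span {f}) :=
  order_via_normalisation_general A f hfA hf
end

section
/- Let ℂ[X] be the polynomial ring in one variable over ℂ and let A = Algebra.adjoin ℂ {X², X³} be the ℂ-subalgebra generated by X² and X³. Then the set {f ∈ ℂ[X] : f·g ∈ A for every g ∈ ℂ[X]} equals the set of polynomials divisible by X²; moreover dim_ℂ (ℂ[X]/X²ℂ[X]) = 2 = 2 · dim_ℂ (ℂ[X]/A), where ℂ[X]/A denotes the quotient of ℂ[X] by the underlying ℂ-subspace of A. -/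
/-!
The subalgebra generated by `X²` and `X³` is exactly the set of polynomials with no linear term:
such polynomials are closed under multiplication, and conversely `p = p(0) + X² q` with every
`X^n`, `n ≥ 2`, a product of `X²` and `X³`. So `ℂ[X]/A ≅ ℂ` via the coefficient of `X`, and `f`
lies in the conductor iff the linear terms of `f` and of `f X` vanish, i.e. iff `X² ∣ f`.
-/

open Polynomial

namespace Polynomial

section CommRing

variable (R : Type*) [CommRing R]

def cuspSubalgebra : Subalgebra R R[X] where
  carrier := {p | p.coeff 1 = 0}
  mul_mem' {p q} hp hq := by
    simp only [Set.mem_ofPred_eq] at *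
    rw [coeff_mul, Finset.Nat.antidiagonal_succ, Finset.sum_cons, Finset.Nat.antidiagonal_zero]
    simp [hp, hq]
  add_mem' {p q} hp hq := by simp_all
  algebraMap_mem' r := by simp

variable {R}

theorem mem_cuspSubalgebra {p : R[X]} : p ∈ cuspSubalgebra R ↔ p.coeff 1 = 0 := Iff.rfl

theorem X_pow_mem_adjoin_X_sq_X_cube {n : ℕ} (hn : 2 ≤ n) :
    (X : R[X]) ^ n ∈ Algebra.adjoin R {X ^ 2, X ^ 3} := by
  induction n using Nat.strong_induction_on with
  | _ n ih =>
    obtain rfl | rfl | hn4 : n = 2 ∨ n = 3 ∨ 4 ≤ n := by omega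
    · exact Algebra.subset_adjoin (by simp)
    · exact Algebra.subset_adjoin (by simp)
    · rw [show n = 2 + (n - 2) by omega, pow_add]
      exact mul_mem (Algebra.subset_adjoin (by simp)) (ih _ (by omega) (by omega))

theorem X_sq_mul_mem_adjoin_X_sq_X_cube (q : R[X]) :
    X ^ 2 * q ∈ Algebra.adjoin R {X ^ 2, X ^ 3} := by
  induction q using Polynomial.induction_on' with
  | add p q hp hq => rw [mul_add]; exact add_mem hp hq
  | monomial n a =>
    rw [← C_mul_X_pow_eq_monomial, mul_left_comm, ← pow_add]
    exact mul_mem (Subalgebra.algebraMap_mem _ a) (X_pow_mem_adjoin_X_sq_X_cube (by omega))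

theorem adjoin_X_sq_X_cube : Algebra.adjoin R {X ^ 2, X ^ 3} = cuspSubalgebra R := by
  refine le_antisymm (Algebra.adjoin_le ?_) fun p hp => ?_
  · rintro _ (rfl | rfl) <;> simp [mem_cuspSubalgebra, coeff_X_pow]
  · obtain ⟨q, hq⟩ : X ^ 2 ∣ p - C (p.coeff 0) := by
      rw [X_pow_dvd_iff]
      intro d hd
      interval_cases d <;> simp [mem_cuspSubalgebra.mp hp]
    rw [sub_eq_iff_eq_add] at hq
    rw [hq]
    exact add_mem (X_sq_mul_mem_adjoin_X_sq_X_cube q) (Subalgebra.algebraMap_mem _ _)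

theorem cuspSubalgebra_toSubmodule :
    Subalgebra.toSubmodule (cuspSubalgebra R) = LinearMap.ker (lcoeff R 1) := by
  ext p
  simp [mem_cuspSubalgebra]

theorem mul_mem_cuspSubalgebra_iff {f : R[X]} :
    (∀ g, f * g ∈ cuspSubalgebra R) ↔ X ^ 2 ∣ f := by
  refine ⟨fun hf => X_pow_dvd_iff.mpr fun d hd => ?_, ?_⟩
  · interval_cases d
    · simpa [mem_cuspSubalgebra] using hf X
    · simpa [mem_cuspSubalgebra] using hf 1
  · rintro ⟨q, rfl⟩ g
    rw [← adjoin_X_sq_X_cube, mul_assoc]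
    exact X_sq_mul_mem_adjoin_X_sq_X_cube _

end CommRing

theorem finrank_quotient_cuspSubalgebra (K : Type*) [Field K] :
    Module.finrank K (K[X] ⧸ Subalgebra.toSubmodule (cuspSubalgebra K)) = 1 := by
  have hsurj : Function.Surjective (lcoeff K 1) := fun c => ⟨C c * X, by simp⟩
  rw [cuspSubalgebra_toSubmodule,
    ((lcoeff K 1).quotKerEquivOfSurjective hsurj).finrank_eq, Module.finrank_self]

end Polynomial

theorem cusp_is_gorenstein :
    {f : Polynomial ℂ |
        ∀ g : Polynomial ℂ, f * g ∈ Algebra.adjoin ℂ ({X ^ 2, X ^ 3} : Set (Polynomial ℂ))} =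
      {f : Polynomial ℂ | X ^ 2 ∣ f} ∧
    Module.finrank ℂ (Polynomial ℂ ⧸ Ideal.span ({X ^ 2} : Set (Polynomial ℂ))) = 2 ∧
    2 = 2 * Module.finrank ℂ
      (Polynomial ℂ ⧸
        Subalgebra.toSubmodule (Algebra.adjoin ℂ ({X ^ 2, X ^ 3} : Set (Polynomial ℂ)))) := by
  rw [adjoin_X_sq_X_cube, finrank_quotient_cuspSubalgebra,
    finrank_quotient_span_eq_natDegree, natDegree_X_pow]
  exact ⟨Set.ext fun _ => mul_mem_cuspSubalgebra_iff, rfl, rfl⟩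
end

section
/- Let ℂ[X] be the polynomial ring in one variable over ℂ and let A = Algebra.adjoin ℂ {X³, X⁴, X⁵} be the ℂ-subalgebra generated by X³, X⁴ and X⁵. Then the set {f ∈ ℂ[X] : f·g ∈ A for every g ∈ ℂ[X]} equals the set of polynomials divisible by X³; moreover dim_ℂ (ℂ[X]/X³ℂ[X]) = 3, which is not equal to 2 · dim_ℂ (ℂ[X]/A) = 4, where ℂ[X]/A denotes the quotient of ℂ[X] by the underlying ℂ-subspace of A. -/
/-!
The semigroup generated by 3, 4, 5 is `ℕ ∖ {1, 2}`, so `A = R[X³, X⁴, X⁵]` consists exactly of the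
polynomials without linear and quadratic terms. Hence `X, X²` span a complement of `A`, giving
`δ = 2`, and `f * X ^ k ∈ A` for `k = 0, 2` already forces the coefficients of `1, X, X²` in `f`
to vanish, so the conductor is `X³ R[X]` and `n = 3 ≠ 2 δ`.
-/

open Polynomial Module

section

variable (R : Type*) [CommRing R]

noncomputable abbrev monomialCurveRing : Subalgebra R R[X] :=
  Algebra.adjoin R {X ^ 3, X ^ 4, X ^ 5}

noncomputable def coeffOneTwoVanishing : Subalgebra R R[X] where
  carrier := {p | p.coeff 1 = 0 ∧ p.coeff 2 = 0}
  add_mem' := by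
    rintro a b ⟨ha1, ha2⟩ ⟨hb1, hb2⟩
    simp [ha1, ha2, hb1, hb2]
  mul_mem' := by
    rintro a b ⟨ha1, ha2⟩ ⟨hb1, hb2⟩
    constructor <;>
    · show (a * b).coeff _ = 0
      rw [coeff_mul, Finset.Nat.sum_antidiagonal_eq_sum_range_succ_mk]
      simp [Finset.sum_range_succ, ha1, ha2, hb1, hb2]
  algebraMap_mem' r := by
    constructor <;> simp

variable {R}

theorem X_pow_mem_monomialCurveRing {n : ℕ} (h1 : n ≠ 1) (h2 : n ≠ 2) :
    (X : R[X]) ^ n ∈ monomialCurveRing R := by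
  induction n using Nat.strong_induction_on with
  | _ n ih =>
    match n, h1, h2 with
    | 0, _, _ => simp
    | 3, _, _ => exact Algebra.subset_adjoin (by simp)
    | 4, _, _ => exact Algebra.subset_adjoin (by simp)
    | 5, _, _ => exact Algebra.subset_adjoin (by simp)
    | n + 6, _, _ =>
      rw [show (X : R[X]) ^ (n + 6) = X ^ 3 * X ^ (n + 3) by ring]
      exact mul_mem (Algebra.subset_adjoin (by simp)) (ih (n + 3) (by omega) (by omega) (by omega))

theorem mem_monomialCurveRing_iff {p : R[X]} :
    p ∈ monomialCurveRing R ↔ p.coeff 1 = 0 ∧ p.coeff 2 = 0 := by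
  constructor
  · have hle : monomialCurveRing R ≤ coeffOneTwoVanishing R := by
      rw [Algebra.adjoin_le_iff]
      rintro q (rfl | rfl | rfl) <;> constructor <;> simp [coeff_X_pow]
    exact fun hp => hle hp
  · rintro ⟨h1, h2⟩
    rw [p.as_sum_support_C_mul_X_pow]
    refine Subalgebra.sum_mem _ fun n hn => ?_
    have hn1 : n ≠ 1 := by rintro rfl; simp [Polynomial.mem_support_iff, h1] at hn
    have hn2 : n ≠ 2 := by rintro rfl; simp [Polynomial.mem_support_iff, h2] at hn
    exact mul_mem (Subalgebra.algebraMap_mem _ _) (X_pow_mem_monomialCurveRing hn1 hn2)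

theorem mem_monomialCurveRing_of_X_pow_three_dvd {p : R[X]} (hp : X ^ 3 ∣ p) :
    p ∈ monomialCurveRing R := by
  rw [X_pow_dvd_iff] at hp
  exact mem_monomialCurveRing_iff.2 ⟨hp 1 (by norm_num), hp 2 (by norm_num)⟩

theorem forall_mul_mem_monomialCurveRing_iff {f : R[X]} :
    (∀ g, f * g ∈ monomialCurveRing R) ↔ X ^ 3 ∣ f := by
  refine ⟨fun h => ?_, fun hf g => mem_monomialCurveRing_of_X_pow_three_dvd (hf.mul_right g)⟩
  obtain ⟨hf1, hf2⟩ := mem_monomialCurveRing_iff.1 (by simpa using h 1)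
  have hf0 : f.coeff 0 = 0 := by
    have := (mem_monomialCurveRing_iff.1 (h (X ^ 2))).2
    rwa [show (2 : ℕ) = 0 + 2 from rfl, coeff_mul_X_pow] at this
  rw [X_pow_dvd_iff]
  intro d hd
  interval_cases d <;> assumption

theorem finrank_quotient_monomialCurveRing [Nontrivial R] :
    finrank R (R[X] ⧸ Subalgebra.toSubmodule (monomialCurveRing R)) = 2 := by
  let φ : R[X] →ₗ[R] R × R := (lcoeff R 1).prod (lcoeff R 2)
  have hker : LinearMap.ker φ = Subalgebra.toSubmodule (monomialCurveRing R) := by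
    ext p
    simp [φ, mem_monomialCurveRing_iff]
  have hsurj : Function.Surjective φ := fun ⟨a, b⟩ =>
    ⟨C a * X + C b * X ^ 2, by simp [φ, coeff_X_pow]⟩
  rw [← hker, (φ.quotKerEquivOfSurjective hsurj).finrank_eq, finrank_prod, finrank_self]

end

theorem monomial_curve_not_gorenstein :
    {f : Polynomial ℂ |
        ∀ g : Polynomial ℂ,
          f * g ∈ Algebra.adjoin ℂ ({X ^ 3, X ^ 4, X ^ 5} : Set (Polynomial ℂ))} =
      {f : Polynomial ℂ | X ^ 3 ∣ f} ∧
    Module.finrank ℂ (Polynomial ℂ ⧸ Ideal.span ({X ^ 3} : Set (Polynomial ℂ))) = 3 ∧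
    2 * Module.finrank ℂ
        (Polynomial ℂ ⧸
          Subalgebra.toSubmodule
            (Algebra.adjoin ℂ ({X ^ 3, X ^ 4, X ^ 5} : Set (Polynomial ℂ)))) = 4 ∧
    Module.finrank ℂ (Polynomial ℂ ⧸ Ideal.span ({X ^ 3} : Set (Polynomial ℂ))) ≠
      2 * Module.finrank ℂ
        (Polynomial ℂ ⧸
          Subalgebra.toSubmodule
            (Algebra.adjoin ℂ ({X ^ 3, X ^ 4, X ^ 5} : Set (Polynomial ℂ)))) := by
  have hn : finrank ℂ (ℂ[X] ⧸ Ideal.span {(X : ℂ[X]) ^ 3}) = 3 := by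
    rw [finrank_quotient_span_eq_natDegree, natDegree_X_pow]
  have hδ : finrank ℂ (ℂ[X] ⧸ Subalgebra.toSubmodule (monomialCurveRing ℂ)) = 2 :=
    finrank_quotient_monomialCurveRing
  exact ⟨Set.ext fun f => forall_mul_mem_monomialCurveRing_iff, hn, by rw [hδ], by rw [hn, hδ]; omega⟩
end

section
/- Let ℂ[X] be the polynomial ring in one variable over ℂ and let D : ℂ[X] → ℂ[X] be the operator D(f) = X⁶ · f′, where f′ denotes the formal derivative of f. Then the determinant of the 3×3 matrix whose (j,i)-entry is D^j applied to the i-th element of the triple (1, X³, X⁴), for 0 ≤ j, i ≤ 2, equals 12·X²²; in particular its root multiplicity at 0 is 22. -/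
/-! The operator `X ^ 6 * d/dX` sends `X ^ n` to `n * X ^ (n + 5)`, so every entry of the Wronskian
matrix of `(1, X³, X⁴)` is a monomial, and the first column is `(1, 0, 0)`. The determinant is
`3 * 36 * X ^ 22 - 4 * 24 * X ^ 22 = 12 * X ^ 22`, whose order of vanishing at `0` is its
trailing degree. -/

open Polynomial

theorem rootMultiplicity_zero_C_mul_X_pow {R : Type*} [CommRing R] {a : R} (ha : a ≠ 0)
    (n : ℕ) : rootMultiplicity 0 (C a * X ^ n) = n := by
  rw [rootMultiplicity_eq_natTrailingDegree', C_mul_X_pow_eq_monomial,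
    natTrailingDegree_monomial ha]

theorem iterate_X_pow_mul_derivative_X_pow {R : Type*} [CommSemiring R] (m n j : ℕ) :
    (fun f : R[X] => X ^ (m + 1) * derivative f)^[j] (X ^ n) =
      C (∏ i ∈ Finset.range j, ((n + m * i : ℕ) : R)) * X ^ (n + m * j) := by
  induction j with
  | zero => simp
  | succ j ih =>
    rw [Function.iterate_succ_apply', ih, derivative_C_mul_X_pow, Finset.prod_range_succ]
    rcases Nat.eq_zero_or_pos (n + m * j) with h | h
    · simp [h]
    · rw [mul_left_comm, ← pow_add]
      congr 2
      lia

theorem wronskian_matrix_one_X_pow_three_X_pow_four :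
    (Matrix.of fun j i : Fin 3 =>
        (fun f : ℂ[X] => X ^ 6 * derivative f)^[(j : ℕ)] (![1, X ^ 3, X ^ 4] i)) =
      !![1, X ^ 3, X ^ 4; 0, 3 * X ^ 8, 4 * X ^ 9; 0, 24 * X ^ 13, 36 * X ^ 14] := by
  have hmonomials : ![(1 : ℂ[X]), X ^ 3, X ^ 4] = fun i => X ^ ![0, 3, 4] i := by
    ext i : 1; fin_cases i <;> simp
  ext j i : 1
  fin_cases j <;> fin_cases i <;>
    norm_num [hmonomials, iterate_X_pow_mul_derivative_X_pow 5, Finset.prod_range_succ, map_ofNat]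

theorem wronskian_weight_of_triple_point :
    Matrix.det (Matrix.of fun j i : Fin 3 =>
        (fun f : Polynomial ℂ => X ^ 6 * derivative f)^[(j : ℕ)]
          (![1, X ^ 3, X ^ 4] i)) = 12 * X ^ 22 ∧
    rootMultiplicity 0
      (Matrix.det (Matrix.of fun j i : Fin 3 =>
        (fun f : Polynomial ℂ => X ^ 6 * derivative f)^[(j : ℕ)]
          (![1, X ^ 3, X ^ 4] i))) = 22 := by
  have hdet : Matrix.det (Matrix.of fun j i : Fin 3 =>
      (fun f : ℂ[X] => X ^ 6 * derivative f)^[(j : ℕ)] (![1, X ^ 3, X ^ 4] i)) = 12 * X ^ 22 := by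
    rw [wronskian_matrix_one_X_pow_three_X_pow_four, Matrix.det_fin_three]
    simp only [Matrix.of_apply, Matrix.cons_val', Matrix.cons_val_zero, Matrix.cons_val_one,
      Matrix.cons_val, Matrix.cons_val_fin_one]
    ring
  refine ⟨hdet, ?_⟩
  rw [hdet, ← map_ofNat C 12]
  exact rootMultiplicity_zero_C_mul_X_pow (by norm_num) 22
end
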